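/- Let Z_t ∈ ℝ^{f×f} satisfy Z_t = Z_{t-1} + y_t x_tᵀ with Z_0 = 0, and let q = (0,0,1)ᵀ and C_t have columns x_t, y_t, x_{t+1}. Then the output o_t = (η/t) Z_t C_t q equals (W₀ - η∇L_t(W₀))ᵀ x_{t+1} when W₀ = 0, i.e. o_t = (η/t) Σ_{i=1}^t yᵢ (xᵢᵀ x_{t+1}). -/
import Mathlib


open Matrix

/-- with Z_t = Z_{t-1} + y_t x_tᵀ, Z_0 = 0, q = (0,0,1)ᵀ and C_t the matrix
with columns x_t, y_t, x_{t+1}, the output o_t = (η/t) Z_t C_t q equals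
(W₀ - η ∇L_t(W₀))ᵀ x_{t+1} for W₀ = 0, i.e. o_t = (η/t) Σ_{i=1}^t (xᵢᵀ x_{t+1}) yᵢ. -/
theorem stmt_9 (f : ℕ) (x y : ℕ → Fin f → ℝ) (t : ℕ) (ht : 0 < t) (η : ℝ)
    (Z : ℕ → Matrix (Fin f) (Fin f) ℝ) (hZ0 : Z 0 = 0)
    (hZ : ∀ s, 1 ≤ s → Z s = Z (s - 1) + Matrix.vecMulVec (y s) (x s))
    (C : ℕ → Matrix (Fin f) (Fin 3) ℝ)
    (hC : ∀ s, C s = Matrix.of fun i j => ![x s i, y s i, x (s + 1) i] j)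
    (q : Fin 3 → ℝ) (hq : q = ![0, 0, 1])
    (o : Fin f → ℝ) (ho : o = (η / (t : ℝ)) • (Z t *ᵥ (C t *ᵥ q))) :
    o = (η / (t : ℝ)) • ∑ i ∈ Finset.Icc 1 t, (x i ⬝ᵥ x (t + 1)) • y i := by
  have hCq : C t *ᵥ q = x (t + 1) := by
    funext i
    simp [hC, hq, Matrix.mulVec, dotProduct, Fin.sum_univ_three]
  have hZsum : ∀ s : ℕ, Z s = ∑ i ∈ Finset.Icc 1 s, Matrix.vecMulVec (y i) (x i) := by
    intro s
    induction s with
    | zero => simp [hZ0]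
    | succ n ih =>
      rw [hZ (n + 1) (Nat.le_add_left 1 n)]
      simp only [Nat.add_sub_cancel, ih]
      rw [Finset.sum_Icc_succ_top (Nat.le_add_left 1 n)]
  rw [ho, hCq, hZsum]
  congr 1
  funext i
  rw [Matrix.mulVec]
  simp only [Finset.sum_apply, dotProduct, Matrix.sum_apply,
    Matrix.vecMulVec_apply, Pi.smul_apply, smul_eq_mul, dotProduct]
  simp only [Finset.sum_mul, Finset.mul_sum]
  rw [Finset.sum_comm]
  apply Finset.sum_congr rfl
  intro j _
  apply Finset.sum_congr rfl
  intro k _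
  ring
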